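/- arXiv:1909.03735 — 3 statements merged into one kernel-verified Lean document; each statement's English description precedes it below -/
import Mathlib

section
/- Let I = [a,b] be a compact interval, z ∈ ℝ, w : I → ℝ continuous, and J = {t ∈ I : w(t) > z}. Assume w is locally absolutely continuous on J with w′(t) ≤ 0 for almost every t ∈ J, and that either w(a) ≤ z or w(a) ≤ w(b). Then either w(t) ≤ z for all t ∈ I, or there exists k > z such that w(t) = k for all t ∈ I. -/
/-!
On every closed interval where `w > z` the fundamental theorem of calculus and `w' ≤ 0` make `w`
non-increasing. Hence once `w` has reached the level `z` it can never climb back above it: at the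
last point `c` before `s` with `w c ≤ z`, we would get `w s ≤ w u` for all `u ∈ (c, s]`, and
continuity at `c` gives `w s ≤ w c ≤ z`. So if `w a ≤ z` then `w ≤ z` on `[a, b]`; otherwise
`w a ≤ w b` forbids `w` from ever touching `z`, and `w` is non-increasing on all of `[a, b]` with
`w a ≤ w b`, i.e. constant.
-/

open MeasureTheory Set Filter Topology

theorem intervalIntegral.integral_nonpos_of_ae_restrict {μ : Measure ℝ} {f : ℝ → ℝ} {c d : ℝ}
    (hcd : c ≤ d) (hf : f ≤ᵐ[μ.restrict (Icc c d)] 0) : ∫ t in c..d, f t ∂μ ≤ 0 := by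
  have h := intervalIntegral.integral_nonneg_of_ae_restrict hcd (μ := μ) (f := fun t => -f t)
    (hf.mono fun _ ht => neg_nonneg.2 ht)
  rwa [intervalIntegral.integral_neg, neg_nonneg] at h

def AntitoneAbove (w : ℝ → ℝ) (z a b : ℝ) : Prop :=
  ∀ c d, c ≤ d → Icc c d ⊆ {t ∈ Icc a b | z < w t} → w d ≤ w c

namespace AntitoneAbove

variable {w : ℝ → ℝ} {z a b : ℝ}

theorem mono {a' b' : ℝ} (h : AntitoneAbove w z a b) (ha : a ≤ a') (hb : b' ≤ b) :
    AntitoneAbove w z a' b' :=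
  fun c d hcd hsub => h c d hcd fun _ hu => ⟨Icc_subset_Icc ha hb (hsub hu).1, (hsub hu).2⟩

theorem of_integral_eq {w' : ℝ → ℝ}
    (hFTC : ∀ c d, c ≤ d → Icc c d ⊆ {t ∈ Icc a b | z < w t} → w d - w c = ∫ t in c..d, w' t)
    (hder : ∀ᵐ t, t ∈ {t ∈ Icc a b | z < w t} → w' t ≤ 0) : AntitoneAbove w z a b := by
  intro c d hcd hsub
  have hint : ∫ t in c..d, w' t ≤ 0 := by
    refine intervalIntegral.integral_nonpos_of_ae_restrict hcd ?_
    filter_upwards [ae_restrict_of_ae hder, ae_restrict_mem measurableSet_Icc] with t ht htcd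
    exact ht (hsub htcd)
  linarith [hFTC c d hcd hsub]

theorem le_of_le_left (h : AntitoneAbove w z a b) (hw : ContinuousOn w (Icc a b)) (hab : a ≤ b)
    (ha : w a ≤ z) : w b ≤ z := by
  by_contra! hb
  set S := Icc a b ∩ w ⁻¹' Iic z
  have hS : IsCompact S := isCompact_Icc.of_isClosed_subset
    (hw.preimage_isClosed_of_isClosed isClosed_Icc isClosed_Iic) inter_subset_left
  set c := sSup S
  have hcS : c ∈ S := hS.sSup_mem ⟨a, ⟨left_mem_Icc.2 hab, ha⟩⟩
  have hcb : c < b := hcS.1.2.lt_of_ne fun hc => (hc ▸ hcS.2 : w b ≤ z).not_gt hb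
  have habove : ∀ u ∈ Ioc c b, z < w u := fun u hu => by
    by_contra! hu'
    exact hu.1.not_ge (le_csSup hS.bddAbove ⟨⟨hcS.1.1.trans hu.1.le, hu.2⟩, hu'⟩)
  have hIoc : Ioc c b ⊆ Icc a b := fun u hu => ⟨hcS.1.1.trans hu.1.le, hu.2⟩
  have hle : ∀ u ∈ Ioc c b, w b ≤ w u := fun u hu => h u b hu.2 fun t ht =>
    have htIoc : t ∈ Ioc c b := ⟨hu.1.trans_le ht.1, ht.2⟩
    ⟨hIoc htIoc, habove t htIoc⟩
  have : NeBot (𝓝[Ioc c b] c) := left_nhdsWithin_Ioc_neBot hcb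
  have hwc : w b ≤ w c :=
    ge_of_tendsto ((hw c hcS.1).mono hIoc) (eventually_mem_nhdsWithin.mono hle)
  exact (hwc.trans hcS.2).not_gt hb

end AntitoneAbove

theorem barrier_lemma_general
    (a b z : ℝ) (w w' : ℝ → ℝ)
    (hw : ContinuousOn w (Icc a b))
    (J : Set ℝ) (hJ : J = {t ∈ Icc a b | z < w t})
    (hFTC : ∀ c d : ℝ, c ≤ d → Icc c d ⊆ J → w d - w c = ∫ t in c..d, w' t)
    (hder : ∀ᵐ t ∂(volume : Measure ℝ), t ∈ J → w' t ≤ 0)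
    (hbc : w a ≤ z ∨ w a ≤ w b) :
    (∀ t ∈ Icc a b, w t ≤ z) ∨ ∃ k > z, ∀ t ∈ Icc a b, w t = k := by
  subst hJ
  have hanti : AntitoneAbove w z a b := .of_integral_eq hFTC hder
  have barrier : ∀ t s, a ≤ t → t ≤ s → s ≤ b → w t ≤ z → w s ≤ z := fun t s hat hts hsb hwt =>
    (hanti.mono hat hsb).le_of_le_left (hw.mono (Icc_subset_Icc hat hsb)) hts hwt
  rcases le_or_gt (w a) z with ha | ha
  · exact .inl fun t ht => barrier a t le_rfl ht.1 ht.2 ha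
  have hab : w a ≤ w b := hbc.resolve_left ha.not_ge
  have habove : ∀ t ∈ Icc a b, z < w t := fun t ht => by
    by_contra! hwt
    exact (hab.trans (barrier t b ht.1 ht.2 le_rfl hwt)).not_gt ha
  have hmem : ∀ c d, a ≤ c → d ≤ b → Icc c d ⊆ {t ∈ Icc a b | z < w t} := fun c d hc hd u hu =>
    have hu' : u ∈ Icc a b := Icc_subset_Icc hc hd hu
    ⟨hu', habove u hu'⟩
  refine .inr ⟨w a, ha, fun t ht => ?_⟩
  have hta : w t ≤ w a := hanti a t ht.1 (hmem a t le_rfl ht.2)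
  have hbt : w b ≤ w t := hanti t b ht.2 (hmem t b ht.1 le_rfl)
  linarith

/-- barrier lemma: Let `w` be continuous on `[a,b]`,
`J = {t ∈ [a,b] : w t > z}`, `w` locally absolutely continuous on `J`
(expressed by the fundamental theorem of calculus on compact subintervals of `J`
with a.e. derivative `w'`), `w' ≤ 0` a.e. on `J`, and `w a ≤ z` or `w a ≤ w b`.
Then `w ≤ z` on `[a,b]`, or `w` is constantly equal to some `k > z`. -/
theorem barrier_lemma
    (a b z : ℝ) (hab : a < b) (w w' : ℝ → ℝ)
    (hw : ContinuousOn w (Icc a b))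
    (J : Set ℝ) (hJ : J = {t ∈ Icc a b | z < w t})
    (hFTC : ∀ c d : ℝ, c ≤ d → Icc c d ⊆ J → w d - w c = ∫ t in c..d, w' t)
    (hder : ∀ᵐ t ∂(volume : Measure ℝ), t ∈ J → w' t ≤ 0)
    (hbc : w a ≤ z ∨ w a ≤ w b) :
    (∀ t ∈ Icc a b, w t ≤ z) ∨ ∃ k > z, ∀ t ∈ Icc a b, w t = k :=
  barrier_lemma_general a b z w w' hw J hJ hFTC hder hbc
end

section
/- Let R ⊆ I × ℝⁿ be compact with R_t := {x : (t,x) ∈ R} nonempty for every t ∈ I (an admissible region). Then there exist continuous functions h : I × ℝⁿ → ℝ and p = (p₁,p₂) : I × ℝⁿ → I × ℝⁿ such that: (i) R = h⁻¹((−∞, 0]); (ii) h is continuously differentiable on (I × ℝⁿ) \ R; (iii) p is bounded, p(t,x) = (t,x) for (t,x) ∈ R, and ⟨∇ₓh(t,x), p₂(t,x) − x⟩ ≤ 0 for all (t,x) ∈ (I × ℝⁿ) \ R. -/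
/-!
Choose `r ≥ 0` with `‖x‖ ≤ r` on `R`, a smooth `f ≥ 0` whose support is exactly
`{‖x‖ < r + 1} \ R`, and put `h = f + ramp (‖x‖² - r²)`, where `ramp u = u · smoothTransition u`
vanishes exactly for `u ≤ 0` and equals `u` for `u ≥ 1`. Then `h ≥ 0` vanishes exactly on `R`,
and where `‖x‖ > r + 1` it agrees with `‖x‖² - r²`, so `∇ₓh = 2x` there. Let `p` clamp `t` to
`[a, b]` and retract `x` radially onto the closed ball of radius `r + 1`: either `p₂ = x`, or
`∇ₓh = 2x` while `p₂ - x` is a nonpositive multiple of `x`.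
-/

open Set Topology
open scoped RealInnerProductSpace ContDiff

noncomputable def smoothRamp (u : ℝ) : ℝ := u * Real.smoothTransition u

theorem contDiff_smoothRamp {n : ℕ∞} : ContDiff ℝ n smoothRamp :=
  contDiff_id.mul Real.smoothTransition.contDiff

theorem smoothRamp_nonneg (u : ℝ) : 0 ≤ smoothRamp u := by
  rcases le_or_gt u 0 with hu | hu
  · simp [smoothRamp, Real.smoothTransition.zero_of_nonpos hu]
  · exact mul_nonneg hu.le (Real.smoothTransition.nonneg u)

theorem smoothRamp_eq_zero_iff {u : ℝ} : smoothRamp u = 0 ↔ u ≤ 0 := by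
  rw [smoothRamp, mul_eq_zero, Real.smoothTransition.zero_iff_nonpos]
  exact ⟨fun h => h.elim le_of_eq id, Or.inr⟩

theorem smoothRamp_of_one_le {u : ℝ} (hu : 1 ≤ u) : smoothRamp u = u := by
  rw [smoothRamp, Real.smoothTransition.one_of_one_le hu, mul_one]

theorem hasGradientAt_norm_sq {E : Type*} [NormedAddCommGroup E] [InnerProductSpace ℝ E]
    [CompleteSpace E] (x : E) : HasGradientAt (fun y => ‖y‖ ^ 2) ((2 : ℝ) • x) x := by
  rw [hasGradientAt_iff_hasFDerivAt]
  refine (hasStrictFDerivAt_norm_sq x).hasFDerivAt.congr_fderiv ?_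
  ext v
  simp [two_mul]

section RadialRetraction

variable {E : Type*} [NormedAddCommGroup E] [NormedSpace ℝ E]

noncomputable def radialRetraction (r : ℝ) (x : E) : E := (r / max r ‖x‖) • x

theorem continuous_radialRetraction {r : ℝ} (hr : 0 < r) :
    Continuous (radialRetraction (E := E) r) :=
  (continuous_const.div (continuous_const.max continuous_norm)
    fun _ => (lt_max_of_lt_left hr).ne').smul continuous_id

theorem radialRetraction_of_norm_le {r : ℝ} {x : E} (hx : ‖x‖ ≤ r) :
    radialRetraction r x = x := by
  rcases eq_or_ne x 0 with rfl | hx0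
  · simp [radialRetraction]
  · have hr : r ≠ 0 := ((norm_pos_iff.2 hx0).trans_le hx).ne'
    rw [radialRetraction, max_eq_left hx, div_self hr, one_smul]

theorem norm_radialRetraction_le {r : ℝ} (hr : 0 ≤ r) (x : E) : ‖radialRetraction r x‖ ≤ r := by
  rw [radialRetraction, norm_smul, Real.norm_of_nonneg (by positivity), div_mul_eq_mul_div]
  exact div_le_of_le_mul₀ (le_max_of_le_left hr) hr
    (mul_le_mul_of_nonneg_left (le_max_right r ‖x‖) hr)

end RadialRetraction

theorem inner_radialRetraction_sub_self_nonpos {E : Type*} [NormedAddCommGroup E]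
    [InnerProductSpace ℝ E] (r : ℝ) (x : E) : ⟪x, radialRetraction r x - x⟫ ≤ 0 := by
  have hκ : r / max r ‖x‖ ≤ 1 :=
    div_le_one_of_le₀ (le_max_left _ _) ((norm_nonneg x).trans (le_max_right _ _))
  have hsub : (r / max r ‖x‖) • x - x = (r / max r ‖x‖ - 1) • x := by rw [sub_smul, one_smul]
  rw [radialRetraction, hsub, real_inner_smul_right, real_inner_self_eq_norm_sq]
  exact mul_nonpos_of_nonpos_of_nonneg (by linarith) (sq_nonneg _)

section
variable {F E : Type*} [NormedAddCommGroup F] [NormedSpace ℝ F] [FiniteDimensional ℝ F]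
  [NormedAddCommGroup E] [InnerProductSpace ℝ E] [FiniteDimensional ℝ E]

theorem exists_contDiff_nonpos_iff_mem_and_gradient_eq {K : Set (F × E)} (hK : IsClosed K)
    {r : ℝ} (hr : 0 ≤ r) (hKr : ∀ z ∈ K, ‖z.2‖ ≤ r) :
    ∃ h : F × E → ℝ, ContDiff ℝ ∞ h ∧ (∀ z, h z ≤ 0 ↔ z ∈ K) ∧
      ∀ z : F × E, r + 1 < ‖z.2‖ → gradient (fun y => h (z.1, y)) z.2 = (2 : ℝ) • z.2 := by
  have hU : IsOpen ({z : F × E | ‖z.2‖ < r + 1} \ K) :=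
    (isOpen_lt continuous_snd.norm continuous_const).sdiff hK
  obtain ⟨f, hf_supp, hf_smooth, hf_range⟩ := hU.exists_contDiff_support_eq (n := ⊤)
  have hf_nonneg (z : F × E) : 0 ≤ f z := (hf_range ⟨z, rfl⟩).1
  have hf_eq_zero_iff (z : F × E) : f z = 0 ↔ z ∉ {z : F × E | ‖z.2‖ < r + 1} \ K := by
    rw [← hf_supp, Function.mem_support, not_not]
  refine ⟨fun z => f z + smoothRamp (‖z.2‖ ^ 2 - r ^ 2),
    hf_smooth.add (contDiff_smoothRamp.comp
      (((contDiff_norm_sq ℝ).comp contDiff_snd).sub contDiff_const)), fun z => ?_, fun z hz => ?_⟩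
  · have hramp := smoothRamp_nonneg (‖z.2‖ ^ 2 - r ^ 2)
    change f z + _ ≤ 0 ↔ _
    rw [(add_nonneg (hf_nonneg z) hramp).ge_iff_eq', add_eq_zero_iff_of_nonneg (hf_nonneg z)
      hramp, hf_eq_zero_iff, smoothRamp_eq_zero_iff, sub_nonpos, sq_le_sq₀ (norm_nonneg _) hr]
    refine ⟨fun ⟨hzU, hzr⟩ => ?_, fun hzK => ⟨fun hzU => hzU.2 hzK, hKr z hzK⟩⟩
    by_contra hzK
    exact hzU ⟨show ‖z.2‖ < r + 1 by linarith, hzK⟩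
  · have h_near : (fun y => f (z.1, y) + smoothRamp (‖y‖ ^ 2 - r ^ 2)) =ᶠ[𝓝 z.2]
        fun y => ‖y‖ ^ 2 - r ^ 2 := by
      filter_upwards [(isOpen_lt continuous_const continuous_norm).mem_nhds hz] with y hy
      have hfy : f (z.1, y) = 0 := (hf_eq_zero_iff _).2 fun hyU => hy.not_gt hyU.1
      have hy1 : 1 ≤ ‖y‖ ^ 2 - r ^ 2 := by nlinarith [show r + 1 < ‖y‖ from hy]
      rw [hfy, zero_add, smoothRamp_of_one_le hy1]
    rw [h_near.gradient_eq]
    exact (hasGradientAt_iff_hasFDerivAt.2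
      ((hasGradientAt_norm_sq z.2).hasFDerivAt.sub_const (r ^ 2))).gradient

end

theorem admissible_region_has_admissible_pair_general
    (n : ℕ) (a b : ℝ)
    (R : Set (ℝ × EuclideanSpace ℝ (Fin n)))
    (hRc : IsCompact R)
    (hRsub : R ⊆ Icc a b ×ˢ (univ : Set (EuclideanSpace ℝ (Fin n)))) :
    ∃ (h : ℝ × EuclideanSpace ℝ (Fin n) → ℝ)
      (p : ℝ × EuclideanSpace ℝ (Fin n) → ℝ × EuclideanSpace ℝ (Fin n)),
      Continuous h ∧ Continuous p ∧
      -- (H1)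
      R = {z ∈ Icc a b ×ˢ (univ : Set (EuclideanSpace ℝ (Fin n))) | h z ≤ 0} ∧
      -- (H2)
      ContDiffOn ℝ 1 h ((Icc a b ×ˢ (univ : Set (EuclideanSpace ℝ (Fin n)))) \ R) ∧
      -- (H3)
      Bornology.IsBounded (Set.range p) ∧
      (∀ z ∈ R, p z = z) ∧
      (∀ z ∈ (Icc a b ×ˢ (univ : Set (EuclideanSpace ℝ (Fin n)))) \ R,
        (inner ℝ (gradient (fun y => h (z.1, y)) z.2) ((p z).2 - z.2) : ℝ) ≤ 0) := by
  obtain ⟨r, hr, hRr⟩ := hRc.isBounded.exists_pos_norm_le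
  obtain ⟨h, h_smooth, h_nonpos_iff, h_grad⟩ :=
    exists_contDiff_nonpos_iff_mem_and_gradient_eq hRc.isClosed hr.le
      fun z hz => (norm_snd_le z).trans (hRr z hz)
  refine ⟨h, fun z => (max a (min z.1 b), radialRetraction (r + 1) z.2), h_smooth.continuous,
    (continuous_const.max (continuous_fst.min continuous_const)).prodMk
      ((continuous_radialRetraction (by linarith)).comp continuous_snd),
    ?_, h_smooth.contDiffOn.of_le (by norm_cast), ?_, fun z hz => ?_, fun z _ => ?_⟩
  · ext z
    exact ⟨fun hz => ⟨hRsub hz, (h_nonpos_iff z).2 hz⟩, fun hz => (h_nonpos_iff z).1 hz.2⟩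
  · refine ((Metric.isBounded_Icc a (max a b)).prod (Metric.isBounded_closedBall (x := 0) (r := r + 1))).subset
      (range_subset_iff.2 fun z => ⟨⟨le_max_left _ _, max_le_max le_rfl (min_le_right _ _)⟩, ?_⟩)
    exact mem_closedBall_zero_iff.2 (norm_radialRetraction_le (by linarith) _)
  · obtain ⟨⟨ha, hb⟩, -⟩ := hRsub hz
    change (max a (min z.1 b), radialRetraction (r + 1) z.2) = z
    rw [min_eq_left hb, max_eq_right ha, radialRetraction_of_norm_le
      ((norm_snd_le z).trans ((hRr z hz).trans (by linarith)))]
  · rcases le_or_gt ‖z.2‖ (r + 1) with hz | hz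
    · simp [radialRetraction_of_norm_le hz]
    · rw [h_grad z hz, real_inner_smul_left]
      exact mul_nonpos_of_nonneg_of_nonpos zero_le_two (inner_radialRetraction_sub_self_nonpos _ _)

/-- Every admissible region (a compact `R ⊆ [a,b] × ℝⁿ` with nonempty slices)
admits an admissible pair `(h, p)`: `h` continuous with `R = h⁻¹((-∞,0])` inside `[a,b] × ℝⁿ`,
`h` of class `C¹` outside `R`, and `p` bounded, fixing `R` pointwise, with
`⟨∇ₓh(t,x), p₂(t,x) - x⟩ ≤ 0` outside `R`. -/
theorem admissible_region_has_admissible_pair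
    (n : ℕ) (a b : ℝ) (hab : a < b)
    (R : Set (ℝ × EuclideanSpace ℝ (Fin n)))
    (hRc : IsCompact R)
    (hRsub : R ⊆ Icc a b ×ˢ (univ : Set (EuclideanSpace ℝ (Fin n))))
    (hslice : ∀ t ∈ Icc a b, ∃ x, (t, x) ∈ R) :
    ∃ (h : ℝ × EuclideanSpace ℝ (Fin n) → ℝ)
      (p : ℝ × EuclideanSpace ℝ (Fin n) → ℝ × EuclideanSpace ℝ (Fin n)),
      Continuous h ∧ Continuous p ∧
      -- (H1)
      R = {z ∈ Icc a b ×ˢ (univ : Set (EuclideanSpace ℝ (Fin n))) | h z ≤ 0} ∧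
      -- (H2)
      ContDiffOn ℝ 1 h ((Icc a b ×ˢ (univ : Set (EuclideanSpace ℝ (Fin n)))) \ R) ∧
      -- (H3)
      Bornology.IsBounded (Set.range p) ∧
      (∀ z ∈ R, p z = z) ∧
      (∀ z ∈ (Icc a b ×ˢ (univ : Set (EuclideanSpace ℝ (Fin n)))) \ R,
        (inner ℝ (gradient (fun y => h (z.1, y)) z.2) ((p z).2 - z.2) : ℝ) ≤ 0) :=
  admissible_region_has_admissible_pair_general n a b R hRc hRsub
end

section
/- Let I = [a,b], h : I × ℝⁿ → ℝ continuous with R = h⁻¹((−∞,0]), and ε > 0 such that for every absolutely continuous u : I → ℝⁿ with (t,u(t)) ∈ R for all t, the composition t ↦ h(t,u(t)) is absolutely continuous on {t : h(t,u(t)) ∈ (−ε,0)} with (d/dt)h(t,u(t)) ≤ 0 a.e. there. If u : I → ℝⁿ is absolutely continuous with h(a,u(a)) < 0 and h(t,u(t)) ≤ 0 for all t ∈ I, then h(t,u(t)) < 0 for every t ∈ I. -/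
open MeasureTheory Set

/-- strict interiority: Let `φ(t) = h(t, u(t))` for a curve `u` in the
region, with `φ` satisfying the fundamental theorem of calculus (with a.e. derivative
`φ'`) on subintervals of `[a,b]` where `φ ∈ (-ε, 0)`, and `φ' ≤ 0` a.e. there.
If `φ(a) < 0` or `φ(a) < φ(b)`, and `φ ≤ 0` on `[a,b]`, then `φ < 0` on all of
`[a,b]`. -/
theorem strict_solution_region_interiority
    (n : ℕ) (a b ε : ℝ) (hab : a < b) (hε : 0 < ε)
    (h : ℝ × EuclideanSpace ℝ (Fin n) → ℝ) (hc : Continuous h)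
    (u : ℝ → EuclideanSpace ℝ (Fin n)) (hu : ContinuousOn u (Icc a b))
    (φ' : ℝ → ℝ)
    (hFTC : ∀ c d : ℝ, a ≤ c → c ≤ d → d ≤ b →
      (∀ t ∈ Icc c d, h (t, u t) ∈ Ioo (-ε) 0) →
      h (d, u d) - h (c, u c) = ∫ t in c..d, φ' t)
    (hder : ∀ᵐ t ∂(volume : Measure ℝ), t ∈ Icc a b → h (t, u t) ∈ Ioo (-ε) 0 → φ' t ≤ 0)
    (hbc : h (a, u a) < 0 ∨ h (a, u a) < h (b, u b))
    (hle : ∀ t ∈ Icc a b, h (t, u t) ≤ 0) :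
    ∀ t ∈ Icc a b, h (t, u t) < 0 := by
  set φ : ℝ → ℝ := fun t => h (t, u t) with hφ
  have φcont : ContinuousOn φ (Icc a b) :=
    hc.comp_continuousOn (continuousOn_id.prodMk hu)
  have hφa : φ a < 0 := by
    rcases hbc with h1 | h2
    · exact h1
    · exact lt_of_lt_of_le h2 (hle b ⟨le_of_lt hab, le_refl b⟩)
  by_contra hcon
  push_neg at hcon
  obtain ⟨t₀, ht₀I, ht₀⟩ := hcon
  have ht₀0 : φ t₀ = 0 := le_antisymm (hle t₀ ht₀I) ht₀
  -- zero set
  set S : Set ℝ := Icc a b ∩ φ ⁻¹' {0} with hS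
  have hSne : S.Nonempty := ⟨t₀, ht₀I, ht₀0⟩
  have hScl : IsClosed S := φcont.preimage_isClosed_of_isClosed isClosed_Icc isClosed_singleton
  have hSbdd : BddBelow S := ⟨a, fun x hx => hx.1.1⟩
  set ts : ℝ := sInf S with hts
  have htsS : ts ∈ S := hScl.csInf_mem hSne hSbdd
  have htsI : ts ∈ Icc a b := htsS.1
  have htsφ : φ ts = 0 := htsS.2
  have hats : a < ts := by
    rcases lt_or_eq_of_le htsI.1 with h1 | h1
    · exact h1
    · exact absurd (h1 ▸ htsφ) (ne_of_lt hφa)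
  have hneg : ∀ t, a ≤ t → t < ts → φ t < 0 := by
    intro t h1 h2
    have htI : t ∈ Icc a b := ⟨h1, le_trans h2.le htsI.2⟩
    rcases lt_or_eq_of_le (hle t htI) with h3 | h3
    · exact h3
    · exact absurd h2 (not_lt.mpr (csInf_le hSbdd ⟨htI, by simpa using h3⟩))
  -- continuity at ts
  have hcw : ContinuousWithinAt φ (Icc a b) ts := φcont ts htsI
  have key : ∀ η : ℝ, 0 < η → ∃ δ > 0, ∀ t ∈ Icc a b, |t - ts| < δ → |φ t| < η := by
    intro η hη
    rw [Metric.continuousWithinAt_iff] at hcw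
    obtain ⟨δ, hδ, hd⟩ := hcw η hη
    refine ⟨δ, hδ, fun t htI hdist => ?_⟩
    have := hd htI (by simpa [Real.dist_eq] using hdist)
    simpa [Real.dist_eq, htsφ] using this
  obtain ⟨δ, hδ, hd⟩ := key ε hε
  set t₁ : ℝ := max a (ts - δ/2) with ht₁
  have ht₁lt : t₁ < ts := max_lt hats (by linarith)
  have hat₁ : a ≤ t₁ := le_max_left _ _
  have ht₁b : t₁ ≤ b := le_trans ht₁lt.le htsI.2
  have hmem : ∀ t, t₁ ≤ t → t < ts → φ t ∈ Ioo (-ε) 0 := by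
    intro t hl hr
    have htI : t ∈ Icc a b := ⟨le_trans hat₁ hl, le_trans hr.le htsI.2⟩
    have hdist : |t - ts| < δ := by
      rw [abs_sub_lt_iff]
      constructor
      · linarith
      · have : ts - δ/2 ≤ t₁ := le_max_right _ _
        linarith
    have := hd t htI hdist
    have h2 := hneg t htI.1 hr
    constructor
    · have := abs_lt.mp this
      linarith [this.1]
    · exact h2
  have hφt₁ : φ t₁ < 0 := hneg t₁ hat₁ ht₁lt
  obtain ⟨δ', hδ', hd'⟩ := key (-φ t₁) (by linarith)
  set t₂ : ℝ := max ((t₁ + ts)/2) (ts - δ'/2) with ht₂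
  have ht₁₂ : t₁ < t₂ := lt_of_lt_of_le (by linarith) (le_max_left _ _)
  have ht₂ts : t₂ < ts := max_lt (by linarith) (by linarith)
  have ht₂I : t₂ ∈ Icc a b := ⟨le_trans hat₁ ht₁₂.le, le_trans ht₂ts.le htsI.2⟩
  have hφ₂ : φ t₁ < φ t₂ := by
    have hdist : |t₂ - ts| < δ' := by
      rw [abs_sub_lt_iff]
      constructor
      · linarith
      · have : ts - δ'/2 ≤ t₂ := le_max_right _ _
        linarith
    have := abs_lt.mp (hd' t₂ ht₂I hdist)
    linarith [this.1]
  have hIoo : ∀ t ∈ Icc t₁ t₂, φ t ∈ Ioo (-ε) 0 :=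
    fun t ht => hmem t ht.1 (lt_of_le_of_lt ht.2 ht₂ts)
  have hFTC' := hFTC t₁ t₂ hat₁ ht₁₂.le ht₂I.2 hIoo
  have hint : (∫ t in t₁..t₂, φ' t) ≤ 0 := by
    rw [intervalIntegral.integral_of_le ht₁₂.le]
    apply integral_nonpos_of_ae
    have hmeas := ae_restrict_mem (μ := (volume : Measure ℝ)) (measurableSet_Ioc : MeasurableSet (Ioc t₁ t₂))
    have hder' := ae_restrict_of_ae (μ := volume) (s := Ioc t₁ t₂) hder
    filter_upwards [hmeas, hder'] with t ht hdt
    have htI : t ∈ Icc a b := ⟨le_trans hat₁ ht.1.le, le_trans ht.2 ht₂I.2⟩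
    exact hdt htI (hIoo t ⟨ht.1.le, ht.2⟩)
  have : φ t₂ - φ t₁ ≤ 0 := hFTC' ▸ hint
  linarith
end
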